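/- Let L = (L_1,…,L_K) ∈ ℕ^K with L_k ≥ 1 and d ≤ Σ_{k=1}^K L_k, and let w_1,…,w_K > 0 be weights. If W ∈ S_K(L) is a local minimizer of the fusion frame potential FFP_w on S_K(L) and (W, w) ∈ ℰ, then (W, w) is a fusion frame for 𝔽^d, i.e. W_1 + W_2 + … + W_K = 𝔽^d (equivalently, the fusion frame operator S = Σ_k w_k² π_{W_k} is invertible). -/

import Mathlib

open scoped BigOperators

/-- The orthogonal projection onto a subspace `W` of `𝔽^d`, as an endomorphism. -/
noncomputable def projL {𝕜 : Type*} [RCLike 𝕜] {d : ℕ}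
    (W : Submodule 𝕜 (EuclideanSpace 𝕜 (Fin d))) :
    EuclideanSpace 𝕜 (Fin d) →ₗ[𝕜] EuclideanSpace 𝕜 (Fin d) :=
  W.subtype ∘ₗ (W.orthogonalProjectionOnto).toLinearMap

/-- The fusion frame operator `S = Σ w_k² π_{W_k}`. -/
noncomputable def fusionOp {𝕜 : Type*} [RCLike 𝕜] {d K : ℕ}
    (w : Fin K → ℝ) (W : Fin K → Submodule 𝕜 (EuclideanSpace 𝕜 (Fin d))) :
    EuclideanSpace 𝕜 (Fin d) →ₗ[𝕜] EuclideanSpace 𝕜 (Fin d) :=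
  ∑ k, ((w k : 𝕜) ^ 2) • projL (W k)

/-- The fusion frame potential `FFP_w(W) = tr(S²)`. -/
noncomputable def FFP {𝕜 : Type*} [RCLike 𝕜] {d K : ℕ}
    (w : Fin K → ℝ) (W : Fin K → Submodule 𝕜 (EuclideanSpace 𝕜 (Fin d))) : ℝ :=
  RCLike.re (LinearMap.trace 𝕜 (EuclideanSpace 𝕜 (Fin d)) (fusionOp w W ∘ₗ fusionOp w W))

/-- The squared Frobenius norm `‖T‖_F² = tr(T* T)` of an endomorphism of `𝔽^d`. -/
noncomputable def frobSq {𝕜 : Type*} [RCLike 𝕜] {d : ℕ}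
    (T : EuclideanSpace 𝕜 (Fin d) →ₗ[𝕜] EuclideanSpace 𝕜 (Fin d)) : ℝ :=
  RCLike.re (LinearMap.trace 𝕜 (EuclideanSpace 𝕜 (Fin d)) (LinearMap.adjoint T ∘ₗ T))

/-- `W` is a local minimizer of `FFP_w` on `S_K(L)`: it has the prescribed
dimensions and minimizes the potential among all tuples with the same dimensions
within some Frobenius distance `ε`. -/
def IsLocalMinFFP {𝕜 : Type*} [RCLike 𝕜] {d K : ℕ}
    (w : Fin K → ℝ) (L : Fin K → ℕ)
    (W : Fin K → Submodule 𝕜 (EuclideanSpace 𝕜 (Fin d))) : Prop :=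
  (∀ k, Module.finrank 𝕜 (W k) = L k) ∧
  ∃ ε > (0 : ℝ), ∀ V : Fin K → Submodule 𝕜 (EuclideanSpace 𝕜 (Fin d)),
    (∀ k, Module.finrank 𝕜 (V k) = L k) →
    (∑ k, frobSq (projL (W k) - projL (V k))) < ε ^ 2 →
    FFP w W ≤ FFP w V

/-- `(W, w) ∈ ℰ`: every projection `π_{W_k}` is an eigenoperator of `S`. -/
def MemE {𝕜 : Type*} [RCLike 𝕜] {d K : ℕ}
    (w : Fin K → ℝ) (W : Fin K → Submodule 𝕜 (EuclideanSpace 𝕜 (Fin d))) : Prop :=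
  ∀ k, ∃ μ : ℝ, Module.End.HasEigenvalue (fusionOp w W) (μ : 𝕜) ∧
    fusionOp w W ∘ₗ projL (W k) = (μ : 𝕜) • projL (W k)

/-!
If the `W k` are pairwise orthogonal, `dim (⨆ k, W k) = ∑ k, L k ≥ d`. Otherwise some `W j` is not
orthogonal to some `W k`, and the eigenvalue `μ` by which `S` acts on `W j` exceeds `w j ^ 2`,
since `⟪S y, y⟫ ≥ w j ^ 2 ‖y‖ ^ 2 + w k ^ 2 ‖π_{W k} y‖ ^ 2` for `y ∈ W j`. If moreover the `W k`
do not span, there is a unit vector `x` orthogonal to all of them. Turn a unit vector `u ∈ W j`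
towards `x`, i.e. replace it by `v = c u + s x` with `c ^ 2 + s ^ 2 = 1`: this keeps all
dimensions, moves `W` by squared Frobenius distance `2 s ^ 2`, and changes the potential by
`2 w j ^ 2 s ^ 2 (w j ^ 2 - μ) < 0`, so for small `s` it contradicts local minimality.
-/

open scoped InnerProductSpace
open Module Submodule InnerProductSpace

theorem Submodule.finrank_iSup_eq_sum_of_iSupIndep {K M ι : Type*} [Field K] [AddCommGroup M]
    [Module K M] [FiniteDimensional K M] [Fintype ι] [DecidableEq ι] {V : ι → Submodule K M}
    (h : iSupIndep V) : finrank K ↥(⨆ i, V i) = ∑ i, finrank K (V i) := by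
  rw [← DirectSum.range_coeLinearMap,
    LinearMap.finrank_range_of_inj (f := DirectSum.coeLinearMap V) h.dfinsupp_lsum_injective,
    finrank_directSum]

section InnerProductSpace

variable {𝕜 E : Type*} [RCLike 𝕜] [NormedAddCommGroup E] [InnerProductSpace 𝕜 E]

theorem Submodule.exists_norm_eq_one_mem {U : Submodule 𝕜 E} (h : U ≠ ⊥) :
    ∃ u ∈ U, ‖u‖ = 1 := by
  obtain ⟨u, hu, hu0⟩ := exists_mem_ne_zero_of_ne_bot h
  exact ⟨(‖u‖⁻¹ : 𝕜) • u, U.smul_mem _ hu, norm_smul_inv_norm hu0⟩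

theorem Submodule.starProjection_sup_of_isOrtho {U V : Submodule 𝕜 E} [U.HasOrthogonalProjection]
    [V.HasOrthogonalProjection] [(U ⊔ V).HasOrthogonalProjection] (h : U ⟂ V) :
    (U ⊔ V).starProjection = U.starProjection + V.starProjection := by
  ext y
  refine eq_starProjection_of_mem_of_inner_eq_zero
    (add_mem_sup (U.starProjection_apply_mem y) (V.starProjection_apply_mem y)) ?_
  intro z hz
  obtain ⟨a, ha, b, hb, rfl⟩ := mem_sup.1 hz
  have hUb : ⟪U.starProjection y, b⟫_𝕜 = 0 := h.inner_eq (U.starProjection_apply_mem y) hb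
  have hVa : ⟪V.starProjection y, a⟫_𝕜 = 0 := h.symm.inner_eq (V.starProjection_apply_mem y) ha
  have hUa := U.starProjection_inner_eq_zero y a ha
  have hVb := V.starProjection_inner_eq_zero y b hb
  simp only [add_apply, inner_sub_left, inner_add_left, inner_add_right] at hUa hVb ⊢
  linear_combination hUa + hVb - hUb - hVa

theorem Submodule.starProjection_span_singleton_eq_rankOne {v : E} (hv : ‖v‖ = 1) :
    (𝕜 ∙ v).starProjection = rankOne 𝕜 v v := by
  ext y
  rw [starProjection_unit_singleton 𝕜 hv, rankOne_apply]

variable [FiniteDimensional 𝕜 E]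

theorem Submodule.finrank_sup_of_isOrtho {U V : Submodule 𝕜 E}
    (h : U ⟂ V) : finrank 𝕜 ↥(U ⊔ V) = finrank 𝕜 U + finrank 𝕜 V := by
  rw [← finrank_sup_add_finrank_inf_eq, h.disjoint.eq_bot, finrank_bot, add_zero]

theorem Submodule.iSup_eq_top_of_pairwise_isOrtho {ι : Type*} [Fintype ι]
    {V : ι → Submodule 𝕜 E} (hV : Pairwise fun i j => V i ⟂ V j)
    (hdim : finrank 𝕜 E ≤ ∑ i, finrank 𝕜 (V i)) : ⨆ i, V i = ⊤ := by
  classical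
  refine eq_top_of_finrank_eq (le_antisymm (finrank_le _) ?_)
  rwa [finrank_iSup_eq_sum_of_iSupIndep (orthogonalFamily_iff_pairwise.2 hV).independent]

theorem LinearMap.trace_comp_rankOne_self (T : E →ₗ[𝕜] E) (a : E) :
    LinearMap.trace 𝕜 E (T ∘ₗ rankOne 𝕜 a a) = ⟪a, T a⟫_𝕜 := by
  have : T ∘ₗ rankOne 𝕜 a a = (rankOne 𝕜 (T a) a : E →ₗ[𝕜] E) := by
    ext y; simp
  rw [this, trace_rankOne]

theorem re_trace_sq_rankOne_sub_rankOne {u v : E} (hu : ‖u‖ = 1) (hv : ‖v‖ = 1) :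
    RCLike.re (LinearMap.trace 𝕜 E ((rankOne 𝕜 v v - rankOne 𝕜 u u : E →ₗ[𝕜] E) ∘ₗ
      (rankOne 𝕜 v v - rankOne 𝕜 u u : E →ₗ[𝕜] E))) = 2 - 2 * ‖⟪u, v⟫_𝕜‖ ^ 2 := by
  rw [LinearMap.comp_sub, map_sub, LinearMap.trace_comp_rankOne_self,
    LinearMap.trace_comp_rankOne_self]
  simp only [LinearMap.sub_apply, ContinuousLinearMap.coe_coe, rankOne_apply, inner_sub_right,
    inner_smul_right, inner_self_eq_norm_sq_to_K, hu, hv]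
  rw [← inner_conj_symm v u, RCLike.mul_conj, RCLike.conj_mul]
  norm_num
  ring

theorem Submodule.exists_starProjection_eq_add_rankOne_sub_rankOne {U : Submodule 𝕜 E} {u v : E}
    (hu : ‖u‖ = 1) (huU : u ∈ U) (hv : ‖v‖ = 1) (hvU : v ∈ (𝕜 ∙ u) ⊔ Uᗮ) :
    ∃ U' : Submodule 𝕜 E, finrank 𝕜 U' = finrank 𝕜 U ∧
      U'.starProjection = U.starProjection + rankOne 𝕜 v v - rankOne 𝕜 u u := by
  set U₀ := (𝕜 ∙ u)ᗮ ⊓ U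
  have hU : (𝕜 ∙ u) ⊔ U₀ = U :=
    sup_orthogonal_inf_of_hasOrthogonalProjection ((span_singleton_le_iff_mem u U).2 huU)
  have hu₀ : (𝕜 ∙ u) ⟂ U₀ := (isOrtho_orthogonal_right _).mono_right inf_le_left
  have hv₀ : (𝕜 ∙ v) ⟂ U₀ :=
    (isOrtho_sup_left.2 ⟨hu₀, (isOrtho_orthogonal_left U).mono_right inf_le_right⟩).mono_left
      ((span_singleton_le_iff_mem v _).2 hvU)
  have hu0 : u ≠ 0 := norm_ne_zero_iff.1 (by simp [hu])
  have hv0 : v ≠ 0 := norm_ne_zero_iff.1 (by simp [hv])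
  refine ⟨(𝕜 ∙ v) ⊔ U₀, ?_, ?_⟩
  · rw [← hU, finrank_sup_of_isOrtho hu₀, finrank_sup_of_isOrtho hv₀, finrank_span_singleton hu0,
      finrank_span_singleton hv0]
  · rw [← hU, starProjection_sup_of_isOrtho hv₀, starProjection_sup_of_isOrtho hu₀,
      starProjection_span_singleton_eq_rankOne hu, starProjection_span_singleton_eq_rankOne hv]
    abel

end InnerProductSpace

section FusionFrame

variable {𝕜 : Type*} [RCLike 𝕜] {d K : ℕ}
local notation "𝔼" => EuclideanSpace 𝕜 (Fin d)

theorem projL_apply (U : Submodule 𝕜 𝔼) (y : 𝔼) : projL U y = U.starProjection y := rfl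

theorem projL_apply_of_mem {U : Submodule 𝕜 𝔼} {y : 𝔼} (hy : y ∈ U) : projL U y = y :=
  starProjection_eq_self_iff.2 hy

theorem isSymmetric_projL (U : Submodule 𝕜 𝔼) : (projL U).IsSymmetric :=
  U.starProjection_isSymmetric

theorem frobSq_of_isSymmetric {T : 𝔼 →ₗ[𝕜] 𝔼} (hT : T.IsSymmetric) :
    frobSq T = RCLike.re (LinearMap.trace 𝕜 𝔼 (T ∘ₗ T)) := by
  rw [frobSq, hT.adjoint_eq]

theorem fusionOp_update (w : Fin K → ℝ) (W : Fin K → Submodule 𝕜 𝔼) (j : Fin K)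
    (U : Submodule 𝕜 𝔼) :
    fusionOp w (Function.update W j U) =
      fusionOp w W + ((w j : 𝕜) ^ 2) • (projL U - projL (W j)) := by
  rw [← sub_eq_iff_eq_add', fusionOp, fusionOp, ← Finset.sum_sub_distrib,
    Fintype.sum_eq_single j fun k hk => by simp [hk], Function.update_self, smul_sub]

theorem FFP_update (w : Fin K → ℝ) (W : Fin K → Submodule 𝕜 𝔼) (j : Fin K)
    (U : Submodule 𝕜 𝔼) :
    FFP w (Function.update W j U) = FFP w W
      + 2 * w j ^ 2 * RCLike.re (LinearMap.trace 𝕜 𝔼 (fusionOp w W ∘ₗ (projL U - projL (W j))))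
      + w j ^ 4 * RCLike.re (LinearMap.trace 𝕜 𝔼
          ((projL U - projL (W j)) ∘ₗ (projL U - projL (W j)))) := by
  set S := fusionOp w W
  set D := projL U - projL (W j)
  have hsq : (S + ((w j : 𝕜) ^ 2) • D) ∘ₗ (S + ((w j : 𝕜) ^ 2) • D)
      = S ∘ₗ S + ((w j : 𝕜) ^ 2) • (S ∘ₗ D + D ∘ₗ S) + ((w j : 𝕜) ^ 4) • (D ∘ₗ D) := by
    simp only [LinearMap.add_comp, LinearMap.comp_add, LinearMap.smul_comp, LinearMap.comp_smul,
      smul_smul, smul_add, ← pow_add]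
    abel
  rw [FFP, FFP, fusionOp_update, hsq]
  simp only [map_add, map_smul, smul_eq_mul, LinearMap.trace_comp_comm' D S, ← RCLike.ofReal_pow,
    RCLike.re_ofReal_mul]
  ring

theorem sum_frobSq_projL_sub_update (W : Fin K → Submodule 𝕜 𝔼) (j : Fin K)
    (U : Submodule 𝕜 𝔼) :
    ∑ k, frobSq (projL (W k) - projL (Function.update W j U k)) =
      RCLike.re (LinearMap.trace 𝕜 𝔼 ((projL U - projL (W j)) ∘ₗ (projL U - projL (W j)))) := by
  rw [Fintype.sum_eq_single j fun k hk => by simp [hk, frobSq], Function.update_self,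
    frobSq_of_isSymmetric ((isSymmetric_projL _).sub (isSymmetric_projL _)),
    ← neg_sub, LinearMap.neg_comp, LinearMap.comp_neg, neg_neg]

theorem re_inner_fusionOp_self (w : Fin K → ℝ) (W : Fin K → Submodule 𝕜 𝔼) (y : 𝔼) :
    RCLike.re ⟪fusionOp w W y, y⟫_𝕜 = ∑ k, w k ^ 2 * ‖projL (W k) y‖ ^ 2 := by
  simp only [fusionOp, LinearMap.sum_apply, LinearMap.smul_apply, sum_inner, inner_smul_left,
    map_sum, ← RCLike.ofReal_pow, RCLike.conj_ofReal, RCLike.re_ofReal_mul, projL_apply,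
    re_inner_starProjection_eq_normSq]
  rfl

theorem fusionOp_apply_eq_zero_of_mem_orthogonal (w : Fin K → ℝ) {W : Fin K → Submodule 𝕜 𝔼}
    {x : 𝔼} (hx : x ∈ (⨆ k, W k)ᗮ) : fusionOp w W x = 0 := by
  refine (LinearMap.sum_apply _ _ _).trans (Finset.sum_eq_zero fun k _ => ?_)
  rw [LinearMap.smul_apply, projL_apply,
    (starProjection_apply_eq_zero_iff _).2 (orthogonal_le (le_iSup W k) hx), smul_zero]

theorem sq_lt_of_not_isOrtho {w : Fin K → ℝ} {W : Fin K → Submodule 𝕜 𝔼} {j k : Fin K}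
    (hjk : j ≠ k) (hwk : w k ≠ 0) {μ : ℝ} (hS : ∀ y ∈ W j, fusionOp w W y = (μ : 𝕜) • y)
    (hWjk : ¬ W j ⟂ W k) : w j ^ 2 < μ := by
  obtain ⟨y, hyj, hyk⟩ := SetLike.not_le_iff_exists.1 (mt isOrtho_iff_le.2 hWjk)
  have hPk : 0 < ‖projL (W k) y‖ :=
    norm_pos_iff.2 fun h => hyk ((starProjection_apply_eq_zero_iff _).1 h)
  have hy : 0 < ‖y‖ := norm_pos_iff.2 fun h => hyk (h ▸ zero_mem _)
  have hsum : w j ^ 2 * ‖y‖ ^ 2 + w k ^ 2 * ‖projL (W k) y‖ ^ 2 ≤ μ * ‖y‖ ^ 2 :=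
    calc w j ^ 2 * ‖y‖ ^ 2 + w k ^ 2 * ‖projL (W k) y‖ ^ 2
        = ∑ i ∈ {j, k}, w i ^ 2 * ‖projL (W i) y‖ ^ 2 := by
          rw [Finset.sum_pair hjk, projL_apply_of_mem hyj]
      _ ≤ ∑ i, w i ^ 2 * ‖projL (W i) y‖ ^ 2 :=
          Finset.sum_le_sum_of_subset_of_nonneg (Finset.subset_univ _) fun i _ _ => by positivity
      _ = μ * ‖y‖ ^ 2 := by
          rw [← re_inner_fusionOp_self, hS y hyj, inner_smul_left, inner_self_eq_norm_sq_to_K,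
            RCLike.conj_ofReal, ← RCLike.ofReal_pow, ← RCLike.ofReal_mul, RCLike.ofReal_re]
  have : 0 < w k ^ 2 * ‖projL (W k) y‖ ^ 2 := by positivity
  nlinarith

theorem exists_update_FFP_eq {w : Fin K → ℝ} {W : Fin K → Submodule 𝕜 𝔼} {j : Fin K} {μ : ℝ}
    (hS : ∀ y ∈ W j, fusionOp w W y = (μ : 𝕜) • y) {u x : 𝔼} (hu : ‖u‖ = 1) (huW : u ∈ W j)
    (hxW : x ∈ (⨆ k, W k)ᗮ) (hx : ‖x‖ = 1) {c s : ℝ} (hcs : c ^ 2 + s ^ 2 = 1) :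
    ∃ U : Submodule 𝕜 𝔼, finrank 𝕜 U = finrank 𝕜 (W j) ∧
      ∑ k, frobSq (projL (W k) - projL (Function.update W j U k)) = 2 * s ^ 2 ∧
      FFP w (Function.update W j U) = FFP w W + 2 * w j ^ 2 * s ^ 2 * (w j ^ 2 - μ) := by
  have hxj : x ∈ (W j)ᗮ := orthogonal_le (le_iSup W j) hxW
  have hux : ⟪u, x⟫_𝕜 = 0 := inner_right_of_mem_orthogonal huW hxj
  set v : 𝔼 := (c : 𝕜) • u + (s : 𝕜) • x
  have huv : ⟪u, v⟫_𝕜 = c := by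
    rw [inner_add_right, inner_smul_right, inner_smul_right, hux, inner_self_eq_norm_sq_to_K, hu]
    simp
  have hv : ‖v‖ = 1 := by
    have h := norm_add_sq_eq_norm_sq_add_norm_sq_of_inner_eq_zero ((c : 𝕜) • u) ((s : 𝕜) • x)
      (by rw [inner_smul_left, inner_smul_right, hux, mul_zero, mul_zero])
    simp only [norm_smul, hu, hx, RCLike.norm_ofReal, mul_one, abs_mul_abs_self] at h
    refine (mul_self_eq_one_iff.1 (h.trans ?_)).resolve_right (by linarith [norm_nonneg v])
    linear_combination hcs
  have hSv : fusionOp w W v = ((c * μ : ℝ) : 𝕜) • u := by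
    rw [map_add, map_smul, map_smul, hS u huW, fusionOp_apply_eq_zero_of_mem_orthogonal w hxW,
      smul_zero, add_zero, smul_smul, RCLike.ofReal_mul]
  obtain ⟨U, hUdim, hU⟩ := exists_starProjection_eq_add_rankOne_sub_rankOne hu huW hv
    (add_mem_sup (smul_mem _ _ (mem_span_singleton_self u)) (smul_mem _ _ hxj))
  have hD : projL U - projL (W j) = (rankOne 𝕜 v v - rankOne 𝕜 u u : 𝔼 →ₗ[𝕜] 𝔼) := by
    ext y : 1
    simp only [LinearMap.sub_apply, projL_apply, hU, sub_apply, add_apply, rankOne_apply,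
      ContinuousLinearMap.coe_coe]
    abel
  have hsq := re_trace_sq_rankOne_sub_rankOne (𝕜 := 𝕜) hu hv
  rw [huv, RCLike.norm_ofReal, sq_abs] at hsq
  refine ⟨U, hUdim, ?_, ?_⟩
  · rw [sum_frobSq_projL_sub_update, hD, hsq]
    linear_combination (-2) * hcs
  · rw [FFP_update, hD, hsq, LinearMap.comp_sub, map_sub, LinearMap.trace_comp_rankOne_self,
      LinearMap.trace_comp_rankOne_self, hSv, hS u huW, inner_smul_right, inner_smul_right,
      ← inner_conj_symm, huv, RCLike.conj_ofReal, inner_self_eq_norm_sq_to_K, hu,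
      RCLike.ofReal_one, one_pow, mul_one, ← RCLike.ofReal_mul, ← RCLike.ofReal_sub,
      RCLike.ofReal_re]
    linear_combination (2 * w j ^ 2 * μ - 2 * w j ^ 4) * hcs

theorem not_isLocalMinFFP {w : Fin K → ℝ} {L : Fin K → ℕ} {W : Fin K → Submodule 𝕜 𝔼}
    {j : Fin K} (hwj : w j ≠ 0) {μ : ℝ} (hS : ∀ y ∈ W j, fusionOp w W y = (μ : 𝕜) • y)
    (hμ : w j ^ 2 < μ) (hWj : W j ≠ ⊥) (htop : ⨆ k, W k ≠ ⊤) : ¬ IsLocalMinFFP w L W := by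
  rintro ⟨hdim, ε, hε, hloc⟩
  obtain ⟨u, huW, hu⟩ := exists_norm_eq_one_mem hWj
  obtain ⟨x, hxW, hx⟩ := exists_norm_eq_one_mem (mt orthogonal_eq_bot_iff.1 htop)
  set s := min (ε / 2) (1 / 2)
  have hs : 0 < s := lt_min (by positivity) (by norm_num)
  have hsε : s ≤ ε / 2 := min_le_left _ _
  have hs1 : s ≤ 1 / 2 := min_le_right _ _
  obtain ⟨U, hUdim, hdist, hFFP⟩ := exists_update_FFP_eq hS hu huW hxW hx
    (c := √(1 - s ^ 2)) (s := s) (by rw [Real.sq_sqrt (by nlinarith)]; ring)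
  refine (hloc (Function.update W j U) (fun k => ?_) ?_).not_gt ?_
  · rcases eq_or_ne k j with rfl | hk
    · rw [Function.update_self, hUdim, hdim]
    · rw [Function.update_of_ne hk, hdim]
  · rw [hdist]
    nlinarith
  · have : 0 < w j ^ 2 * s ^ 2 := by positivity
    rw [hFFP]
    nlinarith

end FusionFrame

theorem stmt14_general {𝕜 : Type*} [RCLike 𝕜] {d K : ℕ}
    (L : Fin K → ℕ) (hdL : d ≤ ∑ k, L k)
    (w : Fin K → ℝ) (hw : ∀ k, 0 < w k)
    (W : Fin K → Submodule 𝕜 (EuclideanSpace 𝕜 (Fin d)))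
    (hmin : IsLocalMinFFP w L W) (hmemE : MemE w W) :
    (⨆ k, W k) = ⊤ := by
  by_cases hortho : Pairwise fun j k => W j ⟂ W k
  · refine iSup_eq_top_of_pairwise_isOrtho hortho ?_
    simpa [hmin.1] using hdL
  by_contra htop
  obtain ⟨j, k, hjk, hWjk⟩ : ∃ j k, j ≠ k ∧ ¬ W j ⟂ W k := by simpa [Pairwise] using hortho
  obtain ⟨μ, -, hμ⟩ := hmemE j
  have hS : ∀ y ∈ W j, fusionOp w W y = (μ : 𝕜) • y := fun y hy => by
    simpa [projL_apply_of_mem hy] using LinearMap.congr_fun hμ y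
  exact not_isLocalMinFFP (hw j).ne' hS (sq_lt_of_not_isOrtho hjk (hw k).ne' hS hWjk)
    (fun h => hWjk (h ▸ isOrtho_bot_left)) htop hmin

/-- if `W ∈ S_K(L)` with `L_k ≥ 1`, `d ≤ Σ L_k`, is a local
minimizer of `FFP_w` with `(W, w) ∈ ℰ`, then `(W, w)` is a fusion frame, i.e.
the subspaces span `𝔽^d`. -/
theorem stmt14 {𝕜 : Type*} [RCLike 𝕜] {d K : ℕ} (hd : 0 < d)
    (L : Fin K → ℕ) (hL : ∀ k, 1 ≤ L k) (hdL : d ≤ ∑ k, L k)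
    (w : Fin K → ℝ) (hw : ∀ k, 0 < w k)
    (W : Fin K → Submodule 𝕜 (EuclideanSpace 𝕜 (Fin d)))
    (hmin : IsLocalMinFFP w L W) (hmemE : MemE w W) :
    (⨆ k, W k) = ⊤ :=
  stmt14_general L hdL w hw W hmin hmemE
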